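/- For fixed τ ∈ (0,1/2], the function δ ↦ Δh(τ,δ) = h_b(τ*δ) - h_b(δ) is strictly decreasing in δ on (0,1/2), tending to 0 as δ → 1/2. -/

import Mathlib

/-!
With `s = τ * δ = τ + (1 - 2τ) δ`, the derivative of `Δh(τ, ·)` at `δ` is, up to the factor
`1 / log 2`, equal to `(1 - 2τ) h'(s) - h'(δ)`, where `h` is the binary entropy in nats.
For `0 < δ < 1/2` we have `δ < s ≤ 1/2`; since `h'` is strictly decreasing (strict concavity) and
vanishes at `1/2`, we get `0 ≤ h'(s) < h'(δ)`, so the derivative is negative. At `δ = 1/2` the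
convolution is `1/2` whatever `τ` is, so `Δh(τ, 1/2) = 0` and continuity gives the limit.
-/

noncomputable section

/-- Binary entropy function (in bits), with the convention `log 0 = 0`,
so `hb 0 = hb 1 = 0`. -/
def hb (x : ℝ) : ℝ := -(x * Real.logb 2 x) - (1 - x) * Real.logb 2 (1 - x)

/-- Binary convolution: `a * b = a(1-b) + (1-a)b`. -/
def binConv (a b : ℝ) : ℝ := a * (1 - b) + (1 - a) * b

/-- Capacity of a BSC(δ) with Hamming cost constraint τ: `Δh(τ,δ) = h_b(τ*δ) - h_b(δ)`. -/
def dh (τ δ : ℝ) : ℝ := hb (binConv τ δ) - hb δ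

open Real Set Filter Topology

lemma hb_eq_binEntropy_div (x : ℝ) : hb x = binEntropy x / log 2 := by
  simp only [hb, binEntropy, logb, log_inv]
  ring

lemma continuous_hb : Continuous hb := by
  simpa only [funext hb_eq_binEntropy_div] using binEntropy_continuous.div_const (log 2)

section binConv

variable (a b : ℝ)

lemma binConv_eq_add_mul : binConv a b = a + (1 - 2 * a) * b := by
  rw [binConv]; ring

lemma one_sub_two_mul_binConv : 1 - 2 * binConv a b = (1 - 2 * a) * (1 - 2 * b) := by
  rw [binConv]; ring

lemma binConv_half : binConv a (1 / 2) = 1 / 2 := by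
  rw [binConv]; ring

lemma hasDerivAt_binConv : HasDerivAt (binConv a) (1 - 2 * a) b := by
  simpa [funext (binConv_eq_add_mul a)] using ((hasDerivAt_id b).const_mul (1 - 2 * a)).const_add a

variable {a b}

lemma lt_binConv (ha : 0 < a) (hb_lt : b < 1 / 2) : b < binConv a b := by
  rw [binConv_eq_add_mul]; nlinarith

lemma binConv_le_half (ha : a ≤ 1 / 2) (hb_le : b ≤ 1 / 2) : binConv a b ≤ 1 / 2 := by
  nlinarith [one_sub_two_mul_binConv a b]

end binConv

lemma strictAntiOn_deriv_binEntropy : StrictAntiOn (deriv binEntropy) (Ioo 0 1) :=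
  (strictConcave_binEntropy.subset Ioo_subset_Icc_self (convex_Ioo 0 1)).strictAntiOn_deriv
    fun _ hx ↦ differentiableAt_binEntropy hx.1.ne' hx.2.ne

lemma deriv_binEntropy_half : deriv binEntropy (1 / 2) = 0 := by
  norm_num [deriv_binEntropy]

lemma deriv_binEntropy_nonneg {x : ℝ} (hx₀ : 0 < x) (hx : x ≤ 1 / 2) :
    0 ≤ deriv binEntropy x :=
  deriv_binEntropy_half ▸ strictAntiOn_deriv_binEntropy.antitoneOn ⟨hx₀, by linarith⟩
    ⟨by norm_num, by norm_num⟩ hx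

lemma continuous_dh (τ : ℝ) : Continuous (dh τ) := by
  have : Continuous (binConv τ) := by unfold binConv; fun_prop
  exact (continuous_hb.comp this).sub continuous_hb

lemma hasDerivAt_dh {τ δ : ℝ} (hδ₀ : δ ≠ 0) (hδ₁ : δ ≠ 1) (hs₀ : binConv τ δ ≠ 0)
    (hs₁ : binConv τ δ ≠ 1) :
    HasDerivAt (dh τ)
      (((1 - 2 * τ) * deriv binEntropy (binConv τ δ) - deriv binEntropy δ) / log 2) δ := by
  have hs := (differentiableAt_binEntropy hs₀ hs₁).hasDerivAt.comp δ (hasDerivAt_binConv τ δ)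
  have hδ := (differentiableAt_binEntropy hδ₀ hδ₁).hasDerivAt
  have hdh : dh τ = fun x ↦ (binEntropy (binConv τ x) - binEntropy x) / log 2 := by
    ext x; simp only [dh, hb_eq_binEntropy_div, sub_div]
  rw [hdh]
  exact ((hs.sub hδ).div_const (log 2)).congr_deriv (by ring)

lemma dh_strictAntiOn {τ : ℝ} (hτ : τ ∈ Ioc (0 : ℝ) (1 / 2)) :
    StrictAntiOn (dh τ) (Ioo 0 (1 / 2)) := by
  refine strictAntiOn_of_deriv_neg (convex_Ioo _ _) (continuous_dh τ).continuousOn ?_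
  rw [interior_Ioo]
  rintro δ ⟨hδ₀, hδ⟩
  have hδs : δ < binConv τ δ := lt_binConv hτ.1 hδ
  have hs : binConv τ δ ≤ 1 / 2 := binConv_le_half hτ.2 hδ.le
  have hs_nonneg : 0 ≤ deriv binEntropy (binConv τ δ) := deriv_binEntropy_nonneg (by linarith) hs
  have hs_lt : deriv binEntropy (binConv τ δ) < deriv binEntropy δ :=
    strictAntiOn_deriv_binEntropy ⟨hδ₀, by linarith⟩ ⟨by linarith, by linarith⟩ hδs
  rw [(hasDerivAt_dh hδ₀.ne' (by linarith) (by linarith) (by linarith)).deriv]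
  refine div_neg_of_neg_of_pos ?_ (log_pos one_lt_two)
  nlinarith [hτ.1]

lemma tendsto_dh_half (τ : ℝ) : Tendsto (dh τ) (𝓝 (1 / 2)) (𝓝 0) := by
  have h : dh τ (1 / 2) = 0 := by rw [dh, binConv_half, sub_self]
  exact h ▸ (continuous_dh τ).tendsto (1 / 2)

theorem dh_strictAnti_tendsto (τ : ℝ) (hτ : τ ∈ Set.Ioc (0:ℝ) (1 / 2)) :
    StrictAntiOn (fun δ => dh τ δ) (Set.Ioo (0:ℝ) (1 / 2)) ∧
      Filter.Tendsto (fun δ => dh τ δ)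
        (nhdsWithin (1 / 2) (Set.Ioo (0:ℝ) (1 / 2))) (nhds 0) :=
  ⟨dh_strictAntiOn hτ, (tendsto_dh_half τ).mono_left nhdsWithin_le_nhds⟩
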